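/- A signed graph Σ is balanced if and only if the associated signed complete graph K^{D^max}(Σ) is balanced. -/

import Mathlib

open SimpleGraph Polynomial

variable {V : Type*}

/-- The sign of a walk: the product of the signs of its edges. -/
def walkSign {G : SimpleGraph V} (sg : V → V → ℤ) {u v : V} (p : G.Walk u v) : ℤ :=
  (p.darts.map fun d => sg d.toProd.1 d.toProd.2).prod

/-- `sigmaMax G sg u v`: the maximum sign over all shortest `u`–`v` paths. -/
noncomputable def sigmaMax (G : SimpleGraph V) (sg : V → V → ℤ) (u v : V) : ℤ := by
  classical
  exact if ∃ p : G.Walk u v, p.length = G.dist u v ∧ walkSign sg p = 1 then 1 else -1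

/-- `sigmaMin G sg u v`: the minimum sign over all shortest `u`–`v` paths. -/
noncomputable def sigmaMin (G : SimpleGraph V) (sg : V → V → ℤ) (u v : V) : ℤ := by
  classical
  exact if ∃ p : G.Walk u v, p.length = G.dist u v ∧ walkSign sg p = -1 then -1 else 1

/-- `u` and `v` are distance-compatible: all shortest `u`–`v` paths have the same sign. -/
def pairCompatible (G : SimpleGraph V) (sg : V → V → ℤ) (u v : V) : Prop :=
  ∀ p q : G.Walk u v, p.length = G.dist u v → q.length = G.dist u v →
    walkSign sg p = walkSign sg q

/-- The `n`-th power graph: `u ~ v` iff `u ≠ v` and `d(u,v) ≤ n`. -/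
def powerGraph (G : SimpleGraph V) (n : ℕ) : SimpleGraph V where
  Adj u v := u ≠ v ∧ G.dist u v ≤ n
  symm := by
    constructor
    intro u v h
    exact ⟨h.1.symm, by rw [SimpleGraph.dist_comm]; exact h.2⟩
  loopless := by
    constructor
    intro u h
    exact h.1 rfl

/-- A signed graph is balanced if every cycle has positive sign. -/
def SBalanced (G : SimpleGraph V) (sg : V → V → ℤ) : Prop :=
  ∀ ⦃u : V⦄ (p : G.Walk u u), p.IsCycle → walkSign sg p = 1

/-- 2-connectedness: at least 3 vertices and deleting any vertex leaves a connected graph. -/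
def TwoConnected [Fintype V] (G : SimpleGraph V) : Prop :=
  3 ≤ Fintype.card V ∧ ∀ v : V, ((⊤ : G.Subgraph).deleteVerts {v}).coe.Connected

/-- Signature of the associated signed complete graph `K^{D^max}(Σ)`:
edges of `G` keep their sign, non-adjacent pairs get `sigmaMax`. -/
noncomputable def kSigMax (G : SimpleGraph V) (sg : V → V → ℤ) (u v : V) : ℤ := by
  classical
  exact if G.Adj u v then sg u v else sigmaMax G sg u v

/-- Signature of the associated signed complete graph `K^{D^min}(Σ)`. -/
noncomputable def kSigMin (G : SimpleGraph V) (sg : V → V → ℤ) (u v : V) : ℤ := by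
  classical
  exact if G.Adj u v then sg u v else sigmaMin G sg u v

/-!
A connected signed graph is balanced iff it has a potential `θ : V → {±1}` with
`σ(uv) = θ(u) θ(v)` on every edge (Harary). Then every walk from `u` to `v`, in particular every
shortest one, has sign `θ(u) θ(v)`, so `K^{D^max}(Σ)` is given by the same potential and is
balanced. Conversely `Σ` is a signed subgraph of `K^{D^max}(Σ)`.
-/

variable {G H : SimpleGraph V} {sg : V → V → ℤ}

@[simp]
lemma walkSign_nil {u : V} : walkSign sg (Walk.nil : G.Walk u u) = 1 := rfl

@[simp]
lemma walkSign_cons {u v w : V} (h : G.Adj u v) (p : G.Walk v w) :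
    walkSign sg (Walk.cons h p) = sg u v * walkSign sg p := by
  simp [walkSign]

lemma walkSign_append {u v w : V} (p : G.Walk u v) (q : G.Walk v w) :
    walkSign sg (p.append q) = walkSign sg p * walkSign sg q := by
  simp [walkSign, Walk.darts_append]

lemma walkSign_concat {u v w : V} (p : G.Walk u v) (h : G.Adj v w) :
    walkSign sg (p.concat h) = walkSign sg p * sg v w := by
  simp [Walk.concat_eq_append, walkSign_append]

lemma walkSign_reverse (hsym : ∀ u v, sg u v = sg v u) {u v : V} (p : G.Walk u v) :
    walkSign sg p.reverse = walkSign sg p := by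
  induction p with
  | nil => rfl
  | cons h p ih =>
    rw [Walk.reverse_cons, ← Walk.concat_eq_append, walkSign_concat, ih, walkSign_cons, hsym]
    ring

lemma walkSign_eq_one_or_neg_one (hval : ∀ u v, G.Adj u v → sg u v = 1 ∨ sg u v = -1)
    {u v : V} (p : G.Walk u v) : walkSign sg p = 1 ∨ walkSign sg p = -1 := by
  induction p with
  | nil => simp
  | cons h p ih =>
    rw [walkSign_cons]
    rcases hval _ _ h with h1 | h1 <;> rcases ih with h2 | h2 <;> simp [h1, h2]

lemma walkSign_mapLe {sg' : V → V → ℤ} (hGH : G ≤ H) (hsg : ∀ u v, G.Adj u v → sg' u v = sg u v)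
    {u v : V} (p : G.Walk u v) : walkSign sg' (p.mapLe hGH) = walkSign sg p := by
  induction p with
  | nil => rfl
  | cons h p ih => simp [Walk.mapLe, hsg _ _ h, ← ih]

lemma SBalanced.of_le {sg' : V → V → ℤ} (hH : SBalanced H sg') (hGH : G ≤ H)
    (hsg : ∀ u v, G.Adj u v → sg' u v = sg u v) : SBalanced G sg := fun _ p hp =>
  walkSign_mapLe hGH hsg p ▸ hH _ (hp.mapLe hGH)

section Balanced

variable (hb : SBalanced G sg) (hsym : ∀ u v, sg u v = sg v u)
  (hval : ∀ u v, G.Adj u v → sg u v = 1 ∨ sg u v = -1)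
include hb hsym hval

/-- An edge followed by a path back is either a cycle or the edge traversed twice. -/
lemma SBalanced.walkSign_cons_of_isPath {u v : V} (h : G.Adj u v) {q : G.Walk v u}
    (hq : q.IsPath) : walkSign sg (Walk.cons h q) = 1 := by
  cases q with
  | nil => exact absurd rfl h.ne
  | @cons _ w _ h' q' =>
    by_cases hw : w = u
    · subst w
      obtain rfl : q' = Walk.nil := Walk.eq_nil_iff_nil.mpr (Walk.isPath_iff_nil.mp hq.of_cons)
      rcases hval _ _ h with h1 | h1 <;> simp [← hsym u v, h1]
    · refine hb _ ((Walk.cons_isCycle_iff _ h).mpr ⟨hq, fun he => ?_⟩)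
      rw [Walk.edges_cons, List.mem_cons] at he
      rcases he with he | he
      · rcases Sym2.eq_iff.mp he with ⟨huv, -⟩ | ⟨huw, -⟩
        · exact h.ne huv
        · exact hw huw.symm
      · exact ((Walk.cons_isPath_iff _ _).mp hq).2 (q'.snd_mem_support_of_mem_edges he)

lemma SBalanced.walkSign_bypass [DecidableEq V] {u v : V} (p : G.Walk u v) :
    walkSign sg p.bypass = walkSign sg p := by
  induction p with
  | nil => rfl
  | @cons u v w h p ih =>
    rw [Walk.bypass, walkSign_cons, ← ih]
    split_ifs with hs
    · have hdetour := hb.walkSign_cons_of_isPath hsym hval h (p.bypass_isPath.takeUntil hs)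
      conv_rhs => rw [← p.bypass.take_spec hs, walkSign_append, ← mul_assoc]
      rw [← walkSign_cons h, hdetour, one_mul]
    · rw [walkSign_cons]

lemma SBalanced.walkSign_eq {u v : V} (p q : G.Walk u v) : walkSign sg p = walkSign sg q := by
  classical
  have hloop : walkSign sg (p.append q.reverse) = 1 := by
    rw [← hb.walkSign_bypass hsym hval,
      (Walk.isPath_iff_nil.mp (p.append q.reverse).bypass_isPath).eq_nil, walkSign_nil]
  rw [walkSign_append, walkSign_reverse hsym] at hloop
  rcases walkSign_eq_one_or_neg_one hval q with hq | hq <;> rw [hq] at hloop ⊢ <;> linarith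

lemma SBalanced.exists_potential (hconn : G.Connected) :
    ∃ θ : V → ℤ, (∀ v, θ v = 1 ∨ θ v = -1) ∧ ∀ u v, G.Adj u v → sg u v = θ u * θ v := by
  obtain ⟨r⟩ := hconn.nonempty
  let θ v := walkSign sg (hconn r v).some
  refine ⟨θ, fun v => walkSign_eq_one_or_neg_one hval _, fun u v h => ?_⟩
  have hθv : θ v = θ u * sg u v := by
    rw [← walkSign_concat _ h]
    exact hb.walkSign_eq hsym hval _ _
  have hθu : θ u * θ u = 1 := by
    rcases walkSign_eq_one_or_neg_one hval (hconn r u).some with h1 | h1 <;> simp [θ, h1]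
  linear_combination -θ u * hθv - sg u v * hθu

end Balanced

section Potential

variable {θ : V → ℤ} (hθ : ∀ v, θ v = 1 ∨ θ v = -1)
include hθ

lemma walkSign_eq_mul_of_potential (hpot : ∀ u v, G.Adj u v → sg u v = θ u * θ v)
    {u v : V} (p : G.Walk u v) : walkSign sg p = θ u * θ v := by
  induction p with
  | @nil u => rcases hθ u with h | h <;> simp [h]
  | @cons u v w h p ih =>
    rw [walkSign_cons, hpot _ _ h, ih]
    rcases hθ v with h' | h' <;> rw [h'] <;> ring

lemma sBalanced_of_potential (hpot : ∀ u v, G.Adj u v → sg u v = θ u * θ v) :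
    SBalanced G sg := fun u p _ => by
  rw [walkSign_eq_mul_of_potential hθ hpot]
  rcases hθ u with h | h <;> simp [h]

lemma kSigMax_eq_mul_of_potential (hconn : G.Connected)
    (hpot : ∀ u v, G.Adj u v → sg u v = θ u * θ v) (u v : V) :
    kSigMax G sg u v = θ u * θ v := by
  have hwalk := walkSign_eq_mul_of_potential hθ hpot (u := u) (v := v)
  unfold kSigMax sigmaMax
  split_ifs with hadj hpos
  · exact hpot u v hadj
  · obtain ⟨p, -, hp⟩ := hpos
    rw [← hp, hwalk]
  · obtain ⟨p, hp⟩ := hconn.exists_walk_length_eq_dist u v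
    have hne : θ u * θ v ≠ 1 := fun h => hpos ⟨p, hp, h ▸ hwalk p⟩
    rcases hθ u with h1 | h1 <;> rcases hθ v with h2 | h2 <;> simp_all

end Potential

lemma kSigMax_of_adj {u v : V} (h : G.Adj u v) : kSigMax G sg u v = sg u v := by
  simp [kSigMax, h]

theorem balanced_iff_assoc_complete_balanced_general {V : Type*} (G : SimpleGraph V) (sg : V → V → ℤ)
    (hconn : G.Connected) (hsym : ∀ u v, sg u v = sg v u)
    (hval : ∀ u v, G.Adj u v → sg u v = 1 ∨ sg u v = -1) :
    SBalanced G sg ↔ SBalanced (⊤ : SimpleGraph V) (kSigMax G sg) := by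
  constructor
  · intro hb
    obtain ⟨θ, hθ, hpot⟩ := hb.exists_potential hsym hval hconn
    exact sBalanced_of_potential hθ fun u v _ => kSigMax_eq_mul_of_potential hθ hconn hpot u v
  · intro hK
    exact hK.of_le le_top fun _ _ => kSigMax_of_adj

theorem balanced_iff_assoc_complete_balanced {V : Type*} [Fintype V] (G : SimpleGraph V) (sg : V → V → ℤ)
    (hconn : G.Connected) (hsym : ∀ u v, sg u v = sg v u)
    (hval : ∀ u v, G.Adj u v → sg u v = 1 ∨ sg u v = -1) :
    SBalanced G sg ↔ SBalanced (⊤ : SimpleGraph V) (kSigMax G sg) :=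
  balanced_iff_assoc_complete_balanced_general G sg hconn hsym hval
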